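/- The function u(x₁,x₂) = Re((x₁ + i|x₂|)^{3/2}) on ℝ² is harmonic in each open half-plane {x₂ > 0} and {x₂ < 0}, its trace on {x₂ = 0} equals 0 for x₁ ≤ 0 and x₁^{3/2} for x₁ > 0, and the jump [∂u/∂n](x₁) of its normal derivative across {x₂ = 0} equals 3√(−x₁) for x₁ < 0 and 0 for x₁ ≥ 0. -/

import Mathlib

open Real Filter Topology

noncomputable section

-- derivative in the y-direction of u x · at s ≠ 0, where |t| = σ t near s
lemma aux_ydiff (u : ℝ → ℝ → ℝ)
    (hu : ∀ x y : ℝ,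
      u x y = ((Complex.ofReal x + Complex.ofReal |y| * Complex.I) ^ (3 / 2 : ℂ)).re)
    (x σ s : ℝ) (hσ2 : σ * σ = 1) (hs0 : σ * s > 0) (hs : ∀ᶠ t in 𝓝 s, |t| = σ * t) :
    HasDerivAt (fun t => u x t)
      (((3/2 : ℂ) * ((x:ℂ) + (σ:ℂ) * Complex.I * (s:ℂ)) ^ (1/2 : ℂ) * ((σ:ℂ) * Complex.I)).re) s := by
  have hmem : (x:ℂ) + (σ:ℂ) * Complex.I * (s:ℂ) ∈ Complex.slitPlane := by
    rw [Complex.mem_slitPlane_iff]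
    right
    have him : ((x:ℂ) + (σ:ℂ) * Complex.I * (s:ℂ)).im = σ * s := by simp
    rw [him]
    exact hs0.ne'
  have h1 : HasDerivAt (fun z : ℂ => ((x:ℂ) + (σ:ℂ) * Complex.I * z) ^ (3/2 : ℂ))
      ((3/2 : ℂ) * ((x:ℂ) + (σ:ℂ) * Complex.I * (s:ℂ)) ^ ((3/2 : ℂ) - 1) * ((σ:ℂ) * Complex.I))
      ((s:ℝ) : ℂ) := by
    have hb : HasDerivAt (fun z : ℂ => (x:ℂ) + (σ:ℂ) * Complex.I * z) ((σ:ℂ) * Complex.I) (s:ℂ) := by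
      simpa using (((hasDerivAt_id ((s:ℝ):ℂ)).const_mul ((σ:ℂ) * Complex.I)).const_add (x:ℂ))
    simpa using hb.cpow_const hmem
  have h2 := h1.real_of_complex
  have h32 : ((3/2 : ℂ) - 1) = (1/2 : ℂ) := by norm_num
  rw [h32] at h2
  refine h2.congr_of_eventuallyEq ?_
  filter_upwards [hs] with t ht
  rw [hu]
  congr 1
  rw [ht]
  push_cast
  ring

lemma aux_xdiff (u : ℝ → ℝ → ℝ)
    (hu : ∀ x y : ℝ,
      u x y = ((Complex.ofReal x + Complex.ofReal |y| * Complex.I) ^ (3 / 2 : ℂ)).re)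
    (y s : ℝ) (hy : y ≠ 0) :
    HasDerivAt (fun t => u t y)
      (((3/2 : ℂ) * ((s:ℂ) + (|y|:ℝ) * Complex.I) ^ (1/2 : ℂ)).re) s := by
  have hmem : (s:ℂ) + ((|y|:ℝ):ℂ) * Complex.I ∈ Complex.slitPlane := by
    rw [Complex.mem_slitPlane_iff]
    right
    have him : ((s:ℂ) + ((|y|:ℝ):ℂ) * Complex.I).im = |y| := by simp
    rw [him]
    simpa using hy
  have h1 : HasDerivAt (fun z : ℂ => (z + ((|y|:ℝ):ℂ) * Complex.I) ^ (3/2 : ℂ))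
      ((3/2 : ℂ) * ((s:ℂ) + ((|y|:ℝ):ℂ) * Complex.I) ^ ((3/2 : ℂ) - 1)) ((s:ℝ) : ℂ) := by
    simpa using ((hasDerivAt_id ((s:ℝ):ℂ)).add_const (((|y|:ℝ):ℂ) * Complex.I)).cpow_const hmem
  have h2 := h1.real_of_complex
  have h32 : ((3/2 : ℂ) - 1) = (1/2 : ℂ) := by norm_num
  rw [h32] at h2
  refine h2.congr_of_eventuallyEq ?_
  filter_upwards with t
  rw [hu]

lemma jump_ev (u : ℝ → ℝ → ℝ)
    (hu : ∀ x y : ℝ,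
      u x y = ((Complex.ofReal x + Complex.ofReal |y| * Complex.I) ^ (3 / 2 : ℂ)).re)
    (x : ℝ) :
    (fun t : ℝ => -2 * deriv (fun s : ℝ => u x s) t)
      =ᶠ[𝓝[>] (0:ℝ)] (fun t : ℝ => 3 * (((x:ℂ) + Complex.I * (t:ℂ)) ^ (1/2 : ℂ)).im) := by
  filter_upwards [self_mem_nhdsWithin] with t ht
  have ht : (0:ℝ) < t := ht
  have hnear : ∀ᶠ s in 𝓝 t, |s| = 1 * s := by
    filter_upwards [eventually_gt_nhds ht] with s hs
    rw [abs_of_pos hs, one_mul]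
  have hd := (aux_ydiff u hu x 1 t (by norm_num) (by linarith) hnear).deriv
  rw [hd]
  simp only [Complex.ofReal_one, one_mul]
  rw [Complex.mul_I_re]
  simp only [Complex.mul_im]
  norm_num
  ring

lemma jump_neg (x : ℝ) (hx : x < 0) :
    Tendsto (fun t : ℝ => 3 * (((x:ℂ) + Complex.I * (t:ℂ)) ^ (1/2 : ℂ)).im)
      (𝓝[>] (0:ℝ)) (𝓝 (3 * Real.sqrt (-x))) := by
  have hz : Tendsto (fun t : ℝ => (x:ℂ) + Complex.I * (t:ℂ)) (𝓝[>] (0:ℝ))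
      (𝓝[{z : ℂ | 0 ≤ z.im}] ((x:ℝ):ℂ)) := by
    rw [tendsto_nhdsWithin_iff]
    constructor
    · have hc : Continuous (fun t : ℝ => (x:ℂ) + Complex.I * (t:ℂ)) := by continuity
      exact (hc.tendsto' 0 ((x:ℝ):ℂ) (by simp)).mono_left nhdsWithin_le_nhds
    · filter_upwards [self_mem_nhdsWithin] with t ht
      simp only [Set.mem_setOf_eq, Complex.add_im, Complex.ofReal_im, Complex.mul_im,
        Complex.I_re, Complex.ofReal_re, Complex.I_im, Complex.ofReal_im]
      simp
      exact le_of_lt ht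
  have hlog := (Complex.tendsto_log_nhdsWithin_im_nonneg_of_re_neg_of_im_zero
      (show ((x:ℝ):ℂ).re < 0 by simpa) (by simp)).comp hz
  have hexp := (Complex.continuous_exp.tendsto _).comp (hlog.mul_const (1/2 : ℂ))
  have heq : ∀ t : ℝ, ((x:ℂ) + Complex.I * (t:ℂ)) ^ (1/2 : ℂ)
      = Complex.exp (Complex.log ((x:ℂ) + Complex.I * (t:ℂ)) * (1/2 : ℂ)) := by
    intro t
    apply Complex.cpow_def_of_ne_zero
    intro h
    have := congrArg Complex.re h
    simp at this
    linarith
  have hIm := ((Complex.continuous_im.tendsto _).comp hexp).const_mul (3:ℝ)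
  have hval : 3 * (Complex.exp ((Real.log ‖((x:ℝ):ℂ)‖ + π * Complex.I) * (1/2 : ℂ))).im
      = 3 * Real.sqrt (-x) := by
    have habs : ‖((x:ℝ):ℂ)‖ = -x := by
      rw [Complex.norm_real, Real.norm_eq_abs, abs_of_neg hx]
    rw [habs]
    rw [show (((Real.log (-x) : ℝ) : ℂ) + (π:ℝ) * Complex.I) * (1/2 : ℂ)
        = ((Real.log (-x) * (1/2) : ℝ) : ℂ) + ((π/2 : ℝ) : ℂ) * Complex.I by push_cast; ring]
    rw [Complex.exp_im]
    simp only [Complex.add_re, Complex.ofReal_re, Complex.mul_re, Complex.I_re, Complex.I_im,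
      Complex.ofReal_im, Complex.add_im, Complex.mul_im]
    norm_num
    rw [Real.sqrt_eq_rpow, Real.rpow_def_of_pos (by linarith : (0:ℝ) < -x), Real.log_neg_eq_log]
  have final := hval ▸ hIm
  refine Tendsto.congr ?_ final
  intro t
  simp only [Function.comp]
  rw [← heq t]

lemma jump_nonneg (x : ℝ) (hx : 0 ≤ x) :
    Tendsto (fun t : ℝ => 3 * (((x:ℂ) + Complex.I * (t:ℂ)) ^ (1/2 : ℂ)).im)
      (𝓝[>] (0:ℝ)) (𝓝 0) := by
  rcases eq_or_lt_of_le hx with h|h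
  · -- x = 0 : squeeze
    subst h
    have hbound : ∀ᶠ (t:ℝ) in 𝓝[>] (0:ℝ),
        ‖3 * ((((0:ℝ):ℂ) + Complex.I * (t:ℂ)) ^ (1/2 : ℂ)).im‖ ≤ 3 * Real.sqrt t := by
      filter_upwards [self_mem_nhdsWithin] with t ht
      have ht : (0:ℝ) < t := ht
      have hz : ((0:ℝ):ℂ) + Complex.I * (t:ℂ) ≠ 0 := by
        intro h
        have := congrArg Complex.im h
        simp at this
        linarith
      have habs : ‖(((0:ℝ):ℂ) + Complex.I * (t:ℂ)) ^ (1/2 : ℂ)‖ = Real.sqrt t := by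
        rw [Complex.norm_cpow_of_ne_zero hz]
        simp only [Complex.ofReal_zero, zero_add]
        have h2 : ‖Complex.I * (t:ℂ)‖ = t := by
          simp [abs_of_pos ht]
        rw [h2]
        norm_num
        rw [Real.sqrt_eq_rpow]
      have hb : |(((((0:ℝ):ℂ)) + Complex.I * (t:ℂ)) ^ (1/2 : ℂ)).im| ≤ Real.sqrt t := by
        rw [← habs]
        exact Complex.abs_im_le_norm _
      rw [Real.norm_eq_abs, abs_mul, show |(3:ℝ)| = 3 by norm_num]
      nlinarith [hb, abs_nonneg ((((0:ℝ):ℂ) + Complex.I * (t:ℂ)) ^ (1/2 : ℂ)).im]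
    have htend : Tendsto (fun t : ℝ => 3 * Real.sqrt t) (𝓝[>] (0:ℝ)) (𝓝 0) := by
      have h3 : Tendsto (fun t : ℝ => 3 * Real.sqrt t) (𝓝 0) (𝓝 0) := by
        have := (Real.continuous_sqrt.tendsto 0).const_mul (3:ℝ)
        simpa using this
      exact h3.mono_left nhdsWithin_le_nhds
    exact squeeze_zero_norm' hbound htend
  · -- x > 0 : continuity
    have hmem : ((x:ℝ):ℂ) ∈ Complex.slitPlane := by
      rw [Complex.mem_slitPlane_iff]; left; simpa using h
    have hz : Tendsto (fun t : ℝ => (x:ℂ) + Complex.I * (t:ℂ)) (𝓝[>] (0:ℝ)) (𝓝 ((x:ℝ):ℂ)) := by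
      have hc : Continuous (fun t : ℝ => (x:ℂ) + Complex.I * (t:ℂ)) := by continuity
      exact (hc.tendsto' 0 ((x:ℝ):ℂ) (by simp)).mono_left nhdsWithin_le_nhds
    have hcpow := (continuousAt_cpow_const (b := (1/2:ℂ)) hmem).tendsto.comp hz
    have hIm := ((Complex.continuous_im.tendsto _).comp hcpow).const_mul (3:ℝ)
    have hval : (3:ℝ) * (((x:ℝ):ℂ) ^ (1/2 : ℂ)).im = 0 := by
      rw [show ((1:ℂ)/2) = (((1/2 : ℝ)):ℂ) by push_cast; ring]
      rw [← Complex.ofReal_cpow h.le]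
      simp
    have hIm' : Tendsto (fun t : ℝ => 3 * (((x:ℂ) + Complex.I * (t:ℂ)) ^ (1/2 : ℂ)).im)
        (𝓝[>] (0:ℝ)) (𝓝 (3 * (((x:ℝ):ℂ) ^ (1/2 : ℂ)).im)) := hIm
    rw [hval] at hIm'
    exact hIm'

/-- Section 5: the function u(x₁,x₂) = Re((x₁ + i|x₂|)^{3/2}) is harmonic off the line
{x₂ = 0}, its trace on {x₂ = 0} is 0 for x₁ ≤ 0 and x₁^{3/2} for x₁ > 0, and the jump
of its normal derivative [∂u/∂n] = −2 lim_{x₂→0⁺} ∂u/∂x₂ equals 3√(−x₁) for x₁ < 0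
and 0 for x₁ ≥ 0. -/
theorem stmt_15
    (u : ℝ → ℝ → ℝ)
    (hu : ∀ x y : ℝ,
      u x y = ((Complex.ofReal x + Complex.ofReal |y| * Complex.I) ^ (3 / 2 : ℂ)).re) :
    -- harmonic in each open half-plane {x₂ > 0} and {x₂ < 0}
    (∀ x y : ℝ, y ≠ 0 →
      deriv (fun s : ℝ => deriv (fun t : ℝ => u t y) s) x +
      deriv (fun s : ℝ => deriv (fun t : ℝ => u x t) s) y = 0) ∧
    -- trace on {x₂ = 0}
    (∀ x : ℝ, x ≤ 0 → u x 0 = 0) ∧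
    (∀ x : ℝ, 0 < x → u x 0 = x ^ (3 / 2 : ℝ)) ∧
    -- the jump of the normal derivative across {x₂ = 0}
    (∀ x : ℝ, x < 0 →
      Tendsto (fun t : ℝ => -2 * deriv (fun s : ℝ => u x s) t)
        (𝓝[>] 0) (𝓝 (3 * Real.sqrt (-x)))) ∧
    (∀ x : ℝ, 0 ≤ x →
      Tendsto (fun t : ℝ => -2 * deriv (fun s : ℝ => u x s) t)
        (𝓝[>] 0) (𝓝 0)) := by
  refine ⟨?_, ?_, ?_, ?_, ?_⟩
  · -- harmonicity
    intro x y hy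
    set σ : ℝ := if 0 < y then 1 else -1 with hσdef
    have hσ2 : σ * σ = 1 := by rw [hσdef]; split <;> norm_num
    have hσy : σ * y = |y| := by
      rw [hσdef]; rcases lt_trichotomy 0 y with h|h|h
      · simp [h, abs_of_pos h]
      · exact absurd h.symm hy
      · simp [not_lt.2 h.le, abs_of_neg h]
    have hσy' : σ * y > 0 := by rw [hσy]; exact abs_pos.2 hy
    -- the open set where |t| = σ t
    have hnear : ∀ s : ℝ, σ * s > 0 → ∀ᶠ t in 𝓝 s, |t| = σ * t := by
      intro s hs
      have hopen : IsOpen {t : ℝ | σ * t > 0} := isOpen_lt continuous_const (continuous_const.mul continuous_id)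
      filter_upwards [hopen.mem_nhds hs] with t ht
      have : σ * (σ * t) = t := by rw [← mul_assoc, hσ2, one_mul]
      rcases lt_trichotomy 0 t with h|h|h
      · have : σ = 1 ∨ σ = -1 := by rw [hσdef]; split <;> simp
        rcases this with h1|h1
        · rw [abs_of_pos h, h1, one_mul]
        · exfalso; rw [h1] at ht; simp at ht; linarith
      · exfalso; rw [← h] at ht; simp at ht
      · have : σ = 1 ∨ σ = -1 := by rw [hσdef]; split <;> simp
        rcases this with h1|h1
        · exfalso; rw [h1] at ht; simp at ht; linarith
        · rw [abs_of_neg h, h1]; ring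
    -- x-direction second derivative
    have hx2 : deriv (fun s : ℝ => deriv (fun t : ℝ => u t y) s) x
        = ((3/2 : ℂ) * ((1/2 : ℂ) * ((x:ℂ) + (|y|:ℝ) * Complex.I) ^ ((1/2 : ℂ) - 1))).re := by
      have heq : (fun s : ℝ => deriv (fun t : ℝ => u t y) s)
          = fun s : ℝ => (((3/2 : ℂ) * ((s:ℂ) + (|y|:ℝ) * Complex.I) ^ (1/2 : ℂ)).re) := by
        funext s; exact (aux_xdiff u hu y s hy).deriv
      rw [heq]
      have hmem : (x:ℂ) + ((|y|:ℝ):ℂ) * Complex.I ∈ Complex.slitPlane := by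
        rw [Complex.mem_slitPlane_iff]; right
        have him : ((x:ℂ) + ((|y|:ℝ):ℂ) * Complex.I).im = |y| := by simp
        rw [him]; simpa using hy
      have h1 : HasDerivAt (fun z : ℂ => (3/2 : ℂ) * (z + ((|y|:ℝ):ℂ) * Complex.I) ^ (1/2 : ℂ))
          ((3/2 : ℂ) * ((1/2 : ℂ) * ((x:ℂ) + ((|y|:ℝ):ℂ) * Complex.I) ^ ((1/2 : ℂ) - 1))) ((x:ℝ):ℂ) := by
        have := (((hasDerivAt_id ((x:ℝ):ℂ)).add_const (((|y|:ℝ):ℂ) * Complex.I)).cpow_const hmem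
          (c := (1/2 : ℂ))).const_mul (3/2 : ℂ)
        simpa [mul_assoc] using this
      exact h1.real_of_complex.deriv
    -- y-direction second derivative
    have hy2 : deriv (fun s : ℝ => deriv (fun t : ℝ => u x t) s) y
        = ((3/2 : ℂ) * ((1/2 : ℂ) * ((x:ℂ) + (σ:ℂ) * Complex.I * (y:ℂ)) ^ ((1/2 : ℂ) - 1) * ((σ:ℂ) * Complex.I)) * ((σ:ℂ) * Complex.I)).re := by
      have heq : (fun s : ℝ => deriv (fun t : ℝ => u x t) s)
          =ᶠ[𝓝 y] fun s : ℝ => (((3/2 : ℂ) * ((x:ℂ) + (σ:ℂ) * Complex.I * (s:ℂ)) ^ (1/2 : ℂ) * ((σ:ℂ) * Complex.I)).re) := by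
        have hopen : IsOpen {t : ℝ | σ * t > 0} := isOpen_lt continuous_const (continuous_const.mul continuous_id)
        filter_upwards [hopen.mem_nhds hσy'] with s hs
        exact (aux_ydiff u hu x σ s hσ2 hs (hnear s hs)).deriv
      rw [heq.deriv_eq]
      have hmem : (x:ℂ) + (σ:ℂ) * Complex.I * (y:ℂ) ∈ Complex.slitPlane := by
        rw [Complex.mem_slitPlane_iff]; right
        have him : ((x:ℂ) + (σ:ℂ) * Complex.I * (y:ℂ)).im = σ * y := by simp
        rw [him]; exact hσy'.ne'
      have h1 : HasDerivAt (fun z : ℂ => (3/2 : ℂ) * ((x:ℂ) + (σ:ℂ) * Complex.I * z) ^ (1/2 : ℂ) * ((σ:ℂ) * Complex.I))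
          ((3/2 : ℂ) * ((1/2 : ℂ) * ((x:ℂ) + (σ:ℂ) * Complex.I * (y:ℂ)) ^ ((1/2 : ℂ) - 1) * ((σ:ℂ) * Complex.I)) * ((σ:ℂ) * Complex.I)) ((y:ℝ):ℂ) := by
        have hb : HasDerivAt (fun z : ℂ => (x:ℂ) + (σ:ℂ) * Complex.I * z) ((σ:ℂ) * Complex.I) (y:ℂ) := by
          simpa using (((hasDerivAt_id ((y:ℝ):ℂ)).const_mul ((σ:ℂ) * Complex.I)).const_add (x:ℂ))
        have := ((hb.cpow_const hmem (c := (1/2 : ℂ))).const_mul (3/2 : ℂ)).mul_const ((σ:ℂ) * Complex.I)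
        simpa [mul_assoc] using this
      exact h1.real_of_complex.deriv
    rw [hx2, hy2]
    have hbase : (x:ℂ) + (σ:ℂ) * Complex.I * (y:ℂ) = (x:ℂ) + ((|y|:ℝ):ℂ) * Complex.I := by
      rw [← hσy]; push_cast; ring
    rw [hbase, ← Complex.add_re]
    have hσ2' : (σ:ℂ) * (σ:ℂ) = 1 := by
      have : ((σ * σ : ℝ) : ℂ) = ((1:ℝ):ℂ) := by rw [hσ2]
      push_cast at this; exact this
    have : (3/2 : ℂ) * ((1/2 : ℂ) * ((x:ℂ) + ((|y|:ℝ):ℂ) * Complex.I) ^ ((1/2 : ℂ) - 1))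
        + (3/2 : ℂ) * ((1/2 : ℂ) * ((x:ℂ) + ((|y|:ℝ):ℂ) * Complex.I) ^ ((1/2 : ℂ) - 1) * ((σ:ℂ) * Complex.I)) * ((σ:ℂ) * Complex.I) = 0 := by
      have hI : Complex.I * Complex.I = -1 := Complex.I_mul_I
      set w := ((x:ℂ) + ((|y|:ℝ):ℂ) * Complex.I) ^ ((1/2 : ℂ) - 1)
      have : ((σ:ℂ) * Complex.I) * ((σ:ℂ) * Complex.I) = -1 := by
        calc ((σ:ℂ) * Complex.I) * ((σ:ℂ) * Complex.I) = ((σ:ℂ) * (σ:ℂ)) * (Complex.I * Complex.I) := by ring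
        _ = -1 := by rw [hσ2', hI]; ring
      linear_combination (3/4 * w) * this
    rw [this, Complex.zero_re]
  · -- trace, x ≤ 0
    intro x hx
    rw [hu]
    simp only [abs_zero, Complex.ofReal_zero, zero_mul, add_zero]
    rcases eq_or_lt_of_le hx with h|h
    · subst h
      rw [Complex.ofReal_zero, Complex.zero_cpow (by norm_num : (3/2 : ℂ) ≠ 0), Complex.zero_re]
    · rw [Complex.cpow_def_of_ne_zero (by exact_mod_cast h.ne : ((x:ℂ)) ≠ 0)]
      rw [Complex.log, Complex.arg_ofReal_of_neg h]
      have habs : ‖(x:ℂ)‖ = -x := by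
        rw [Complex.norm_real, Real.norm_eq_abs, abs_of_neg h]
      rw [habs, Complex.exp_re]
      have : (((Real.log (-x) : ℝ) : ℂ) + (π : ℝ) * Complex.I) * (3/2 : ℂ) = ((Real.log (-x) : ℝ) : ℂ) * (3/2) + ((π * (3/2) : ℝ) : ℂ) * Complex.I := by push_cast; ring
      rw [this]
      have him2 : (((Real.log (-x) : ℝ) : ℂ) * (3/2) + ((π * (3/2) : ℝ) : ℂ) * Complex.I).im = π * (3/2) := by
        simp
      rw [him2]
      have hc : Real.cos (π * (3/2)) = 0 := by
        have : π * (3/2) = π + π/2 := by ring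
        rw [this, Real.cos_add]
        simp
      rw [hc, mul_zero]
  · -- trace, x > 0
    intro x hx
    rw [hu]
    simp only [abs_zero, Complex.ofReal_zero, zero_mul, add_zero]
    have := Complex.ofReal_cpow hx.le (3/2 : ℝ)
    rw [show (((3:ℝ)/2 : ℝ) : ℂ) = (3/2 : ℂ) by push_cast; ring] at this
    rw [← this, Complex.ofReal_re]
  · -- jump, x < 0
    intro x hx
    exact Filter.Tendsto.congr' (jump_ev u hu x).symm (jump_neg x hx)
  · -- jump, 0 ≤ x
    intro x hx
    exact Filter.Tendsto.congr' (jump_ev u hu x).symm (jump_nonneg x hx)
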